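/- For any bouquet B, ε(B) = 0 if and only if every chord of B is untwisted and no two chords of B interlace. -/

import Mathlib

open Polynomial
open scoped Classical

/-- A bouquet (one-vertex ribbon graph) with `n` loops, encoded as a signed chord
diagram on the circle `ZMod (2*n)`: `σ` is a fixed-point-free involution pairing the
two endpoints of each chord, and `t` records which chords are twisted.
(For `n = 0` the data is pinned to a canonical value, since `ZMod 0 = ℤ`.) -/
structure Bouquet (n : ℕ) where
  σ : ZMod (2*n) → ZMod (2*n)
  invol : ∀ i, σ (σ i) = i
  fpf : ∀ i, σ i ≠ i
  t : ZMod (2*n) → Bool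
  t_inv : ∀ i, t (σ i) = t i
  pin_σ : n = 0 → ∀ i, σ i = -(i+1)
  pin_t : n = 0 → ∀ i, t i = false

namespace Bouquet

variable {n : ℕ}

/-- A canonical (planar, all-untwisted) bouquet with `m` chords. -/
def canonical (m : ℕ) : Bouquet m where
  σ := fun x => -(x+1)
  invol := by intro i; ring
  fpf := by
    intro i h
    have h1 : (2 : ZMod (2*m)) * i + 1 = 0 := by linear_combination - h
    have h2 := congrArg (ZMod.castHom (⟨m, rfl⟩ : (2:ℕ) ∣ 2*m) (ZMod 2)) h1
    rw [map_add, map_mul, map_one, map_zero, map_ofNat] at h2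
    have h3 : ((2 : ℕ) : ZMod 2) = 0 := by decide
    simp only [Nat.cast_ofNat] at h3
    rw [h3, zero_mul, zero_add] at h2
    exact one_ne_zero h2
  t := fun _ => false
  t_inv := fun _ => rfl
  pin_σ := fun _ _ => rfl
  pin_t := fun _ _ => rfl

/-- Transport of a bouquet structure along a bijective relabelling of a
`σ`-invariant set of endpoints. -/
def transport {m : ℕ} (hm : m ≠ 0) (B : Bouquet n) (S : Finset (ZMod (2*n)))
    (hS : ∀ i ∈ S, B.σ i ∈ S) (e : ZMod (2*m) ≃ {x : ZMod (2*n) // x ∈ S}) :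
    Bouquet m where
  σ := fun x => e.symm ⟨B.σ (e x), hS _ (e x).2⟩
  invol := by intro x; simp [B.invol]
  fpf := by
    intro x h
    apply B.fpf ((e x : {x // x ∈ S}) : ZMod (2*n))
    have h2 := congrArg (fun y => (e y : {x // x ∈ S})) h
    simp only [Equiv.apply_symm_apply] at h2
    exact congrArg Subtype.val h2
  t := fun x => B.t (e x)
  t_inv := by intro x; simp [B.t_inv]
  pin_σ := fun h0 => absurd h0 hm
  pin_t := fun h0 => absurd h0 hm

/-- The order isomorphism `ZMod M ≃ Fin M` (via `ZMod.val`), for `M ≠ 0`. -/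
def zmodFinEquiv (M : ℕ) [NeZero M] : ZMod M ≃ Fin M where
  toFun x := ⟨x.val, ZMod.val_lt x⟩
  invFun k := (k.val : ZMod M)
  left_inv x := ZMod.natCast_rightInverse x
  right_inv k := by
    ext
    simpa using ZMod.val_cast_of_lt k.isLt

/-- The induced signed chord diagram `B|S` on a `σ`-invariant set `S` of endpoints,
relabelled order-preservingly by `ZMod (2*(S.card/2))`.  (Junk value otherwise.) -/
noncomputable def restrict (B : Bouquet n) (S : Finset (ZMod (2*n))) :
    Bouquet (S.card / 2) :=
  if h : n ≠ 0 ∧ S.card / 2 ≠ 0 ∧ S.card = 2 * (S.card / 2) ∧ ∀ i ∈ S, B.σ i ∈ S then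
    haveI h1 : NeZero (2*n) := ⟨by omega⟩
    haveI h2 : NeZero (2*(S.card/2)) := ⟨by omega⟩
    let E := zmodFinEquiv (2*n)
    let S' : Finset (Fin (2*n)) := S.image E
    have hc : S'.card = 2*(S.card/2) := by
      rw [Finset.card_image_of_injective _ E.injective]; exact h.2.2.1
    transport h.2.1 B S h.2.2.2
      ((zmodFinEquiv (2*(S.card/2))).trans
        ((S'.orderIsoOfFin hc).toEquiv.trans (Equiv.subtypeEquiv E.symm (by
          intro a
          simp only [S', Finset.mem_image]
          constructor
          · rintro ⟨b, hb, rfl⟩; simpa using hb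
          · intro ha; exact ⟨E.symm a, ha, by simp⟩))))
  else canonical (S.card / 2)

/-- The boundary-tracing permutation `Φ` of a bouquet. -/
def Phi (B : Bouquet n) : ZMod (2*n) × Bool → ZMod (2*n) × Bool :=
  fun p =>
    match p with
    | (i, false) => if B.t (i+1) = true then (B.σ (i+1) - 1, true) else (B.σ (i+1), false)
    | (i, true) => if B.t i = true then (B.σ i, false) else (B.σ i - 1, true)

/-- The number of classes of the equivalence relation generated by a relation. -/
noncomputable def relClasses {α : Type*} (r : α → α → Prop) : ℕ :=
  Nat.card (Quotient (Relation.EqvGen.setoid r))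

/-- The number of orbits of (the permutation generated by) a self-map. -/
noncomputable def orbitCount {α : Type*} (f : α → α) : ℕ :=
  relClasses (fun x y => f x = y)

/-- The number of boundary components `f(B)`: half the number of orbits of `Φ`. -/
noncomputable def numBoundary (B : Bouquet n) : ℕ :=
  if n = 0 then 1 else orbitCount (Phi B) / 2

/-- The Euler genus `ε(B) = 1 + n - f(B)`. -/
noncomputable def eulerGenus (B : Bouquet n) : ℕ := 1 + n - numBoundary B

/-- `i` and `j` represent the same chord of `B`. -/
def SameChord (B : Bouquet n) (i j : ZMod (2*n)) : Prop := j = i ∨ j = B.σ i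

/-- The chords through `i` and through `j` interlace: exactly one endpoint of the
chord through `j` lies strictly between the two endpoints of the chord through `i`
(so the four endpoints alternate in the cyclic order). -/
def Interlace (B : Bouquet n) (i j : ZMod (2*n)) : Prop :=
  Xor' (min i.val (B.σ i).val < j.val ∧ j.val < max i.val (B.σ i).val)
       (min i.val (B.σ i).val < (B.σ j).val ∧ (B.σ j).val < max i.val (B.σ i).val)

/-- The partial-dual Euler genus polynomial
`∂ε_B(z) = Σ_{A ⊆ chords(B)} z^(ε(B|A) + ε(B|Aᶜ))`, the sum running over all
(σ-invariant endpoint sets of) sets of chords of `B`. -/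
noncomputable def pdPoly (B : Bouquet n) : Polynomial ℤ :=
  if h : n = 0 then 1 else
    haveI : NeZero (2*n) := ⟨by omega⟩
    ∑ S ∈ Finset.univ.filter (fun S : Finset (ZMod (2*n)) => ∀ i ∈ S, B.σ i ∈ S),
      (Polynomial.X : Polynomial ℤ) ^
        (eulerGenus (B.restrict S) + eulerGenus (B.restrict Sᶜ))



section Aux


section Orb
variable {α : Type*} {β : Type*}

lemma eqvGen_step (f : α → α) (x : α) :
    Relation.EqvGen (fun a b => f a = b) x (f x) :=
  Relation.EqvGen.rel _ _ rfl

lemma orbitCount_of_id [Finite α] (f : α → α) (hf : ∀ x, f x = x) :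
    orbitCount f = Nat.card α := by
  apply Nat.card_congr
  refine ⟨Quotient.lift id ?_, fun x => ⟦x⟧, ?_, ?_⟩
  · intro a b h
    induction h with
    | rel a b h => rw [← h, hf]
    | refl => rfl
    | symm _ _ _ ih => exact ih.symm
    | trans _ _ _ _ _ ih1 ih2 => exact ih1.trans ih2
  · intro q; induction q using Quotient.inductionOn; rfl
  · intro x; rfl

lemma two_mul_orbitCount_le [Fintype α] (f : α → α) (hf : ∀ x, f x ≠ x) :
    2 * orbitCount f ≤ Nat.card α := by
  classical
  set s := Relation.EqvGen.setoid (fun x y => f x = y)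
  haveI : Fintype (Quotient s) := Fintype.ofFinite _
  have hcard : Fintype.card α = ∑ q : Quotient s,
      (Finset.univ.filter (fun x : α => Quotient.mk s x = q)).card := by
    exact Finset.card_eq_sum_card_fiberwise (fun x _ => Finset.mem_univ _)
  have hfib : ∀ q : Quotient s,
      2 ≤ (Finset.univ.filter (fun x : α => Quotient.mk s x = q)).card := by
    intro q
    obtain ⟨x, rfl⟩ := Quotient.exists_rep q
    rw [Nat.succ_le_iff, Finset.one_lt_card]
    refine ⟨x, ?_, f x, ?_, (fun h => hf x h.symm)⟩
    · simp only [Finset.mem_filter, Finset.mem_univ, true_and]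
    · simp only [Finset.mem_filter, Finset.mem_univ, true_and]
      exact Quotient.sound (Relation.EqvGen.symm _ _ (eqvGen_step f x))
  calc 2 * orbitCount f = ∑ _q : Quotient s, 2 := by
        simp [orbitCount, relClasses, Nat.card_eq_fintype_card, mul_comm]
        exact Fintype.card_congr' rfl
    _ ≤ _ := Finset.sum_le_sum (fun q _ => hfib q)
    _ = Nat.card α := by rw [Nat.card_eq_fintype_card, hcard]

end Orb


section Orb
variable {α : Type*} {β : Type*}


lemma orbitCount_splice [Finite α] [DecidableEq α]
    (f : α → α) (R F : Finset α) (hFR : F ⊆ R)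
    (hF : ∀ x ∈ F, f x = x)
    (hH3 : ∀ x, f x ∈ F → x ∈ F)
    (hH1 : ∀ x ∈ R, x ∉ F → f x ∉ R)
    (e : β ≃ {x : α // x ∉ R})
    (g : β → β)
    (hg : ∀ x : β, ((e (g x) : α) = if f (e x) ∈ R then f (f (e x)) else f (e x))) :
    orbitCount f = orbitCount g + F.card := by
  haveI : Finite β := Finite.of_equiv _ e.symm
  set sf := Relation.EqvGen.setoid (fun x y => f x = y) with hsf
  set sg := Relation.EqvGen.setoid (fun x y : β => g x = y) with hsg
  -- the forward map on representatives
  have hgen : ∀ y : β, Relation.EqvGen (fun x y : β => g x = y) y (g y) := eqvGen_step g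
  have hfgen : ∀ x : α, Relation.EqvGen (fun x y : α => f x = y) x (f x) := eqvGen_step f
  classical
  let h : α → (Quotient sg ⊕ {x : α // x ∈ F}) := fun x =>
    if hx : x ∈ F then Sum.inr ⟨x, hx⟩
    else if hxR : x ∈ R then Sum.inl ⟦e.symm ⟨f x, hH1 x hxR hx⟩⟧
    else Sum.inl ⟦e.symm ⟨x, hxR⟩⟧
  have hstep : ∀ x : α, h x = h (f x) := by
    intro x
    by_cases hx : x ∈ F
    · simp only [h, dif_pos hx, hF x hx]
    · by_cases hxR : x ∈ R
      · -- x ∈ R \ F : f x ∉ R, f x ∉ F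
        have h1 : f x ∉ R := hH1 x hxR hx
        have h2 : f x ∉ F := fun hc => h1 (hFR hc)
        simp only [h, dif_neg hx, dif_pos hxR, dif_neg h2, dif_neg h1]
      · -- x ∉ R
        have hxF : x ∉ F := fun hc => hxR (hFR hc)
        by_cases hfx : f x ∈ R
        · have hfxF : f x ∉ F := fun hc => hx (hH3 x hc)
          simp only [h, dif_neg hx, dif_neg hxR, dif_neg hfxF, dif_pos hfx]
          congr 1
          have := hg (e.symm ⟨x, hxR⟩)
          rw [Equiv.apply_symm_apply] at this
          simp only [if_pos hfx] at this
          have hgx : g (e.symm ⟨x, hxR⟩) = e.symm ⟨f (f x), hH1 (f x) hfx hfxF⟩ := by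
            apply e.injective
            rw [Equiv.apply_symm_apply]
            exact Subtype.ext this
          rw [← hgx]
          exact Quotient.sound (hgen _)
        · simp only [h, dif_neg hx, dif_neg hxR, dif_neg hfx,
            dif_neg (fun hc => hfx (hFR hc))]
          congr 1
          have := hg (e.symm ⟨x, hxR⟩)
          rw [Equiv.apply_symm_apply] at this
          simp only [if_neg hfx] at this
          have hgx : g (e.symm ⟨x, hxR⟩) = e.symm ⟨f x, hfx⟩ := by
            apply e.injective
            rw [Equiv.apply_symm_apply]
            exact Subtype.ext this
          rw [← hgx]
          exact Quotient.sound (hgen _)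
  have hinv : ∀ a b : α, Relation.EqvGen (fun x y => f x = y) a b → h a = h b := by
    intro a b hab
    induction hab with
    | rel a b hab => rw [← hab]; exact hstep a
    | refl => rfl
    | symm _ _ _ ih => exact ih.symm
    | trans _ _ _ _ _ ih1 ih2 => exact ih1.trans ih2
  let H : Quotient sf → (Quotient sg ⊕ {x : α // x ∈ F}) := Quotient.lift h hinv
  have hKsound : ∀ a b : β, Relation.EqvGen (fun x y : β => g x = y) a b →
      (⟦(e a : α)⟧ : Quotient sf) = ⟦(e b : α)⟧ := by
    intro a b hab
    induction hab with
    | rel a b hab =>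
        rw [← hab]
        have := hg a
        by_cases hc : f (e a : α) ∈ R
        · rw [if_pos hc] at this
          rw [this]
          exact Quotient.sound (Relation.EqvGen.trans _ _ _ (hfgen _) (hfgen _))
        · rw [if_neg hc] at this
          rw [this]
          exact Quotient.sound (hfgen _)
    | refl => rfl
    | symm _ _ _ ih => exact ih.symm
    | trans _ _ _ _ _ ih1 ih2 => exact ih1.trans ih2
  let K : (Quotient sg ⊕ {x : α // x ∈ F}) → Quotient sf := fun q =>
    match q with
    | Sum.inl q => Quotient.lift (fun y : β => (⟦(e y : α)⟧ : Quotient sf)) hKsound q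
    | Sum.inr p => ⟦(p : α)⟧
  have hEquiv : Quotient sf ≃ (Quotient sg ⊕ {x : α // x ∈ F}) := by
    refine ⟨H, K, ?_, ?_⟩
    · intro q
      induction q using Quotient.inductionOn with
      | h x =>
        by_cases hx : x ∈ F
        · simp only [H, Quotient.lift_mk, h, dif_pos hx, K]
        · by_cases hxR : x ∈ R
          · simp only [H, Quotient.lift_mk, h, dif_neg hx, dif_pos hxR, K,
              Equiv.apply_symm_apply]
            exact Quotient.sound (Relation.EqvGen.symm _ _ (hfgen x))
          · simp only [H, Quotient.lift_mk, h, dif_neg hx, dif_neg hxR, K,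
              Equiv.apply_symm_apply]
    · intro q
      match q with
      | Sum.inl q =>
        induction q using Quotient.inductionOn with
        | h y =>
          have h1 : (e y : α) ∉ R := (e y).2
          have h2 : (e y : α) ∉ F := fun hc => h1 (hFR hc)
          simp only [K, Quotient.lift_mk, H, h, dif_neg h1, dif_neg h2]
          congr 2
          apply e.injective
          rw [Equiv.apply_symm_apply]
      | Sum.inr p =>
        have h1 : (p : α) ∈ F := p.2
        simp only [K, H, Quotient.lift_mk, h, dif_pos h1]
  have := Nat.card_congr hEquiv
  rw [Nat.card_sum] at this
  simpa [orbitCount, relClasses, Nat.card_eq_fintype_card] using this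

end Orb


section ValLemmas
variable {M : ℕ} [NeZero M]

lemma natCast_val_self (x : ZMod M) : ((x.val : ℕ) : ZMod M) = x :=
  ZMod.natCast_rightInverse x

lemma val_sub_eq (x y : ZMod M) :
    (x - y).val = if y.val ≤ x.val then x.val - y.val else x.val + M - y.val := by
  split_ifs with h
  · exact ZMod.val_sub h
  · have h2 : x - y = ((x.val + M - y.val : ℕ) : ZMod M) := by
      have hy := (ZMod.val_lt y)
      have : (x.val + M - y.val : ℕ) = x.val + (M - y.val) := by omega
      rw [this]
      push_cast [Nat.cast_sub (le_of_lt (ZMod.val_lt y))]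
      rw [natCast_val_self, natCast_val_self, ZMod.natCast_self]
      ring
    rw [h2, ZMod.val_cast_of_lt]
    have := ZMod.val_lt x
    have := ZMod.val_lt y
    omega

lemma val_add_one_of_ne (x : ZMod M) (hx : x ≠ -1) : (x + 1).val = x.val + 1 := by
  have hlt : x.val + 1 < M := by
    rcases lt_or_eq_of_le (Nat.succ_le_of_lt (ZMod.val_lt x)) with h | h
    · exact h
    · exfalso; apply hx
      have : x = ((M - 1 : ℕ) : ZMod M) := by
        rw [← natCast_val_self x]; congr 1; omega
      rw [this]
      have hM : 1 ≤ M := Nat.one_le_iff_ne_zero.mpr (NeZero.ne M)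
      push_cast [Nat.cast_sub hM]
      rw [ZMod.natCast_self]; ring
  have : x + 1 = ((x.val + 1 : ℕ) : ZMod M) := by push_cast [natCast_val_self]; ring
  rw [this, ZMod.val_cast_of_lt hlt]

lemma val_sub_one_of_ne (x : ZMod M) (hx : x ≠ 0) : (x - 1).val = x.val - 1 := by
  have h1 : x - 1 ≠ -1 := by
    intro h; apply hx; have := congrArg (· + 1) h; simpa using this
  have := val_add_one_of_ne (x - 1) h1
  simp only [sub_add_cancel] at this
  have hv : x.val ≠ 0 := fun h => hx ((ZMod.val_eq_zero x).mp h)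
  omega

end ValLemmas

lemma natCast_sub_eq {M : ℕ} [NeZero M] (c : ℕ) (hc : c ≤ M) :
    ((M - c : ℕ) : ZMod M) = -(c : ZMod M) := by
  rw [Nat.cast_sub hc, ZMod.natCast_self]; ring

lemma val_neg_coe {M : ℕ} [NeZero M] (c : ℕ) (hc1 : 1 ≤ c) (hc : c ≤ M) :
    (-(c : ZMod M)).val = M - c := by
  rw [← natCast_sub_eq c hc, ZMod.val_cast_of_lt (by omega)]

section Arc
variable {M : ℕ} [NeZero M]

def InArc (u v y : ZMod M) : Prop := 0 < (y - u).val ∧ (y - u).val < (v - u).val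

lemma val_ne_of_ne {x y : ZMod M} (h : x ≠ y) : x.val ≠ y.val := by
  intro hc; apply h
  rw [← natCast_val_self x, ← natCast_val_self y, hc]

lemma xor_not_iff (p q : Prop) : Xor' (¬p) (¬q) ↔ Xor' p q := by
  unfold Xor'; rw [xor_def, xor_def]; tauto

lemma interval_iff_inArc {u v : ZMod M} (huv : u.val < v.val) (y : ZMod M) :
    (min u.val v.val < y.val ∧ y.val < max u.val v.val) ↔ InArc u v y := by
  have h1 := ZMod.val_lt u
  have h2 := ZMod.val_lt v
  have h3 := ZMod.val_lt y
  unfold InArc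
  rw [val_sub_eq, val_sub_eq]
  rw [min_eq_left (le_of_lt huv), max_eq_right (le_of_lt huv)]
  split_ifs <;> omega

lemma arc_compl {u v y : ZMod M} (huv : u ≠ v) (hyu : y ≠ u) (hyv : y ≠ v) :
    InArc v u y ↔ ¬ InArc u v y := by
  have h1 := ZMod.val_lt u
  have h2 := ZMod.val_lt v
  have h3 := ZMod.val_lt y
  have d1 := val_ne_of_ne huv
  have d2 := val_ne_of_ne hyu
  have d3 := val_ne_of_ne hyv
  unfold InArc
  rw [val_sub_eq, val_sub_eq, val_sub_eq, val_sub_eq]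
  split_ifs <;> omega

lemma xor_interval_iff_xor_inArc (u v j w : ZMod M) (huv : u ≠ v)
    (h1 : j = u → w = v) (h2 : j = v → w = u) (h3 : w = u → j = v) (h4 : w = v → j = u) :
    (Xor' (min u.val v.val < j.val ∧ j.val < max u.val v.val)
         (min u.val v.val < w.val ∧ w.val < max u.val v.val)
    ↔ Xor' (InArc u v j) (InArc u v w)) := by
  by_cases hju : j = u
  · have hw := h1 hju
    subst hju; subst hw
    have hval := val_ne_of_ne huv
    constructor
    · rintro (⟨⟨a, b⟩, -⟩ | ⟨⟨a, b⟩, -⟩) <;> omega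
    · rintro (⟨⟨a, b⟩, -⟩ | ⟨⟨a, b⟩, -⟩)
      · simp [sub_self, ZMod.val_zero] at a
      · exact absurd b (lt_irrefl _)
  · by_cases hjv : j = v
    · have hw := h2 hjv
      subst hjv; subst hw
      have hval := val_ne_of_ne huv
      constructor
      · rintro (⟨⟨a, b⟩, -⟩ | ⟨⟨a, b⟩, -⟩) <;> omega
      · rintro (⟨⟨a, b⟩, -⟩ | ⟨⟨a, b⟩, -⟩)
        · exact absurd b (lt_irrefl _)
        · simp [sub_self, ZMod.val_zero] at a
    · have hwu : w ≠ u := fun hc => hjv (h3 hc)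
      have hwv : w ≠ v := fun hc => hju (h4 hc)
      rcases lt_or_gt_of_ne (val_ne_of_ne huv) with hlt | hlt
      · rw [interval_iff_inArc hlt, interval_iff_inArc hlt]
      · rw [min_comm, max_comm, interval_iff_inArc hlt, interval_iff_inArc hlt,
          arc_compl huv hju hjv, arc_compl huv hwu hwv, xor_not_iff]
end Arc

end Aux


section Bridge
variable {n : ℕ} [NeZero (2*n)]

lemma two_n_pos : 1 < 2*n := by
  have h := NeZero.ne (2*n)
  omega

lemma interlace_iff_xor_inArc (B : Bouquet n) (i j : ZMod (2*n)) :
    Interlace B i j ↔ Xor' (InArc i (B.σ i) j) (InArc i (B.σ i) (B.σ j)) := by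
  apply xor_interval_iff_xor_inArc i (B.σ i) j (B.σ j) (Ne.symm (B.fpf i))
  · rintro rfl; rfl
  · rintro rfl; exact B.invol i
  · intro h; rw [← h, B.invol]
  · intro h
    have := congrArg B.σ h
    rwa [B.invol, B.invol] at this

lemma noninterlace_self (B : Bouquet n) (i j : ZMod (2*n))
    (hj : j = i ∨ j = B.σ i) : ¬ Interlace B i j := by
  rw [interlace_iff_xor_inArc]
  rcases hj with rfl | rfl
  · rintro (⟨⟨hA1, -⟩, -⟩ | ⟨⟨-, hB2⟩, -⟩)
    · simp [InArc, sub_self] at hA1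
    · exact absurd hB2 (lt_irrefl _)
  · rintro (⟨⟨-, hA2⟩, -⟩ | ⟨⟨hB1, -⟩, -⟩)
    · exact absurd hA2 (lt_irrefl _)
    · rw [B.invol, sub_self] at hB1
      simp at hB1

lemma exists_consec (B : Bouquet n) (hnc : ∀ i j, ¬ Interlace B i j) :
    ∃ a, B.σ a = a + 1 := by
  haveI : Fact (1 < 2*n) := ⟨two_n_pos⟩
  obtain ⟨x₀, -, hmin⟩ := Finset.exists_min_image Finset.univ
    (fun x : ZMod (2*n) => (B.σ x - x).val) ⟨0, Finset.mem_univ 0⟩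
  refine ⟨x₀, ?_⟩
  have hd0 : (B.σ x₀ - x₀).val ≠ 0 := by
    intro h
    exact B.fpf x₀ (by have := (ZMod.val_eq_zero _).mp h; linear_combination this)
  by_cases hd1 : (B.σ x₀ - x₀).val = 1
  · have : B.σ x₀ - x₀ = 1 := by
      apply ZMod.val_injective
      rw [hd1, ZMod.val_one]
    linear_combination this
  · exfalso
    set y := x₀ + 1 with hy
    have hv1 : (y - x₀).val = 1 := by
      rw [hy]; simp only [add_sub_cancel_left]; exact ZMod.val_one _
    have harc : InArc x₀ (B.σ x₀) y := by
      constructor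
      · rw [hv1]; omega
      · rw [hv1]; omega
    have hni := hnc x₀ y
    rw [interlace_iff_xor_inArc] at hni
    have harc2 : InArc x₀ (B.σ x₀) (B.σ y) := by
      by_contra hc
      exact hni (Or.inl ⟨harc, hc⟩)
    obtain ⟨hp1, hp2⟩ := harc2
    have hkey : (B.σ y - y).val = (B.σ y - x₀).val - 1 := by
      have h5 : B.σ y - y = (B.σ y - x₀) - 1 := by rw [hy]; ring
      rw [h5]
      apply val_sub_one_of_ne
      intro hc
      rw [hc] at hp1
      simp [ZMod.val_zero] at hp1
    have := hmin y (Finset.mem_univ y)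
    omega
end Bridge

section Shrink
variable {n : ℕ}

/-- order-preserving relabeling `ZMod (2*(n-1)) → ZMod (2*n)` starting at `a+2`. -/
def Lmap (a : ZMod (2*n)) (k : ZMod (2*(n-1))) : ZMod (2*n) :=
  ((k.val : ℕ) : ZMod (2*n)) + a + 2

def rmap (a : ZMod (2*n)) (x : ZMod (2*n)) : ZMod (2*(n-1)) :=
  (((x - (a+2)).val : ℕ) : ZMod (2*(n-1)))

variable (hn : 2 ≤ n)
include hn

section L
variable (a : ZMod (2*n))

lemma nz1 : NeZero (2*n) := ⟨by omega⟩
lemma nz2 : NeZero (2*(n-1)) := ⟨by omega⟩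

lemma val_L (k : ZMod (2*(n-1))) : (Lmap a k - (a+2)).val = k.val := by
  haveI := nz1 hn; haveI := nz2 hn
  have h1 : Lmap a k - (a+2) = ((k.val : ℕ) : ZMod (2*n)) := by
    unfold Lmap; ring
  rw [h1, ZMod.val_cast_of_lt]
  have := ZMod.val_lt k
  omega

lemma rL (k : ZMod (2*(n-1))) : rmap a (Lmap a k) = k := by
  haveI := nz1 hn; haveI := nz2 hn
  unfold rmap
  rw [val_L hn, natCast_val_self]

lemma L_inj : Function.Injective (Lmap (n := n) a) := by
  intro x y h
  have := congrArg (rmap a) h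
  rwa [rL hn, rL hn] at this

lemma neg_two_val : ((-2 : ZMod (2*n))).val = 2*n - 2 := by
  haveI := nz1 hn
  have h : ((2:ZMod (2*n))) = ((2:ℕ) : ZMod (2*n)) := by push_cast; ring
  rw [h, val_neg_coe 2 (by omega) (by omega)]

lemma neg_one_val' : ((-1 : ZMod (2*n))).val = 2*n - 1 := by
  haveI := nz1 hn
  have h : ((1:ZMod (2*n))) = ((1:ℕ) : ZMod (2*n)) := by push_cast; ring
  rw [h, val_neg_coe 1 (by omega) (by omega)]

lemma L_ne_a (k : ZMod (2*(n-1))) : Lmap a k ≠ a := by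
  haveI := nz1 hn; haveI := nz2 hn
  intro h
  have h2 := val_L hn a k
  rw [h] at h2
  have h3 : a - (a + 2) = (-2 : ZMod (2*n)) := by ring
  rw [h3, neg_two_val hn] at h2
  have := ZMod.val_lt k
  omega

lemma L_ne_a1 (k : ZMod (2*(n-1))) : Lmap a k ≠ a + 1 := by
  haveI := nz1 hn; haveI := nz2 hn
  intro h
  have h2 := val_L hn a k
  rw [h] at h2
  have h3 : a + 1 - (a + 2) = (-1 : ZMod (2*n)) := by ring
  rw [h3, neg_one_val' hn] at h2
  have := ZMod.val_lt k
  omega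

lemma Lr (x : ZMod (2*n)) (h1 : x ≠ a) (h2 : x ≠ a + 1) : Lmap a (rmap a x) = x := by
  haveI := nz1 hn; haveI := nz2 hn
  have hv : (x - (a+2)).val < 2*(n-1) := by
    by_contra hc
    push_neg at hc
    have hlt := ZMod.val_lt (x - (a+2))
    have hx : x - (a+2) = (((x - (a+2)).val : ℕ) : ZMod (2*n)) := (natCast_val_self _).symm
    rcases (by omega : (x - (a+2)).val = 2*n - 2 ∨ (x - (a+2)).val = 2*n - 1) with h | h
    · apply h1
      rw [h] at hx
      have h9 : x - (a+2) = (-2 : ZMod (2*n)) := by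
        rw [hx, natCast_sub_eq 2 (by omega)]
        push_cast; ring
      linear_combination h9
    · apply h2
      rw [h] at hx
      have h9 : x - (a+2) = (-1 : ZMod (2*n)) := by
        rw [hx, natCast_sub_eq 1 (by omega)]
        push_cast; ring
      linear_combination h9
  unfold Lmap rmap
  rw [ZMod.val_cast_of_lt hv, natCast_val_self]
  ring

lemma L_succ (k : ZMod (2*(n-1))) (hk : k ≠ -1) : Lmap a (k + 1) = Lmap a k + 1 := by
  haveI := nz1 hn; haveI := nz2 hn
  unfold Lmap
  rw [val_add_one_of_ne k hk]
  push_cast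
  ring

lemma L_neg_one : Lmap a (-1 : ZMod (2*(n-1))) = a - 1 := by
  haveI := nz1 hn; haveI := nz2 hn
  unfold Lmap
  have h : ((-1 : ZMod (2*(n-1)))).val = 2*(n-1) - 1 := by
    have h1 : ((1:ZMod (2*(n-1)))) = ((1:ℕ) : ZMod (2*(n-1))) := by push_cast; ring
    rw [show (-1 : ZMod (2*(n-1))) = -((1:ℕ) : ZMod (2*(n-1))) by rw [← h1]]
    rw [val_neg_coe 1 (by omega) (by omega)]
  rw [h]
  have h2 : (2*(n-1) - 1 : ℕ) = 2*n - 3 := by omega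
  rw [h2, show (2*n - 3 : ℕ) = 2*n - 3 from rfl, natCast_sub_eq 3 (by omega)]
  push_cast; ring

lemma L_pred (k : ZMod (2*(n-1))) (hk : k ≠ 0) : Lmap a (k - 1) = Lmap a k - 1 := by
  haveI := nz1 hn; haveI := nz2 hn
  have h1 : k - 1 ≠ -1 := by
    intro h; apply hk; linear_combination h
  have := L_succ hn a (k - 1) h1
  rw [sub_add_cancel] at this
  rw [this]; ring

lemma L_zero : Lmap a (0 : ZMod (2*(n-1))) = a + 2 := by
  haveI := nz1 hn; haveI := nz2 hn
  unfold Lmap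
  rw [ZMod.val_zero]
  push_cast; ring

end L
end Shrink

section ShrinkDef
variable {n : ℕ}

lemma sigma_ne_a {B : Bouquet n} {a : ZMod (2*n)} (ha : B.σ a = a + 1)
    {x : ZMod (2*n)} (hx : x ≠ a + 1) : B.σ x ≠ a := by
  intro h
  have := congrArg B.σ h
  rw [B.invol, ha] at this
  exact hx this

lemma sigma_ne_a1 {B : Bouquet n} {a : ZMod (2*n)} (ha : B.σ a = a + 1)
    {x : ZMod (2*n)} (hx : x ≠ a) : B.σ x ≠ a + 1 := by
  intro h
  have := congrArg B.σ h
  rw [B.invol, ← ha, B.invol] at this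
  exact hx this

/-- the bouquet obtained by deleting the untwisted consecutive chord `{a, a+1}`. -/
def shrink (hn : 2 ≤ n) (B : Bouquet n) (a : ZMod (2*n)) (ha : B.σ a = a + 1) :
    Bouquet (n-1) where
  σ := fun k => rmap a (B.σ (Lmap a k))
  t := fun k => B.t (Lmap a k)
  invol := by
    intro k
    show rmap a (B.σ (Lmap a (rmap a (B.σ (Lmap a k))))) = k
    rw [Lr hn a _ (sigma_ne_a ha (L_ne_a1 hn a k)) (sigma_ne_a1 ha (L_ne_a hn a k)),
      B.invol, rL hn]
  fpf := by
    intro k h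
    have h2 : Lmap a (rmap a (B.σ (Lmap a k))) = Lmap a k := congrArg (Lmap a) h
    rw [Lr hn a _ (sigma_ne_a ha (L_ne_a1 hn a k)) (sigma_ne_a1 ha (L_ne_a hn a k))] at h2
    exact B.fpf (Lmap a k) h2
  t_inv := by
    intro k
    show B.t (Lmap a (rmap a (B.σ (Lmap a k)))) = B.t (Lmap a k)
    rw [Lr hn a _ (sigma_ne_a ha (L_ne_a1 hn a k)) (sigma_ne_a1 ha (L_ne_a hn a k)),
      B.t_inv]
  pin_σ := by intro h; omega
  pin_t := by intro h; omega

lemma L_shrink_σ (hn : 2 ≤ n) (B : Bouquet n) (a : ZMod (2*n)) (ha : B.σ a = a + 1)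
    (k : ZMod (2*(n-1))) :
    Lmap a ((shrink hn B a ha).σ k) = B.σ (Lmap a k) := by
  show Lmap a (rmap a (B.σ (Lmap a k))) = B.σ (Lmap a k)
  exact Lr hn a _ (sigma_ne_a ha (L_ne_a1 hn a k)) (sigma_ne_a1 ha (L_ne_a hn a k))

lemma shrink_t (hn : 2 ≤ n) (B : Bouquet n) (a : ZMod (2*n)) (ha : B.σ a = a + 1)
    (k : ZMod (2*(n-1))) : (shrink hn B a ha).t k = B.t (Lmap a k) := rfl

end ShrinkDef

section Transfer
variable {n : ℕ}

lemma not_xor_of_iff {p q : Prop} (h : p ↔ q) : ¬ Xor' p q := by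
  unfold Xor'; rw [xor_def]; tauto

lemma inArc_L (hn : 2 ≤ n) (a : ZMod (2*n)) (u v y : ZMod (2*(n-1))) :
    InArc u v y ↔ InArc (Lmap a u) (Lmap a v) (Lmap a y) := by
  haveI := nz1 hn; haveI := nz2 hn
  have key : ∀ w z : ZMod (2*(n-1)), (Lmap a w - Lmap a z).val =
      if z.val ≤ w.val then w.val - z.val else w.val + 2*n - z.val := by
    intro w z
    have h1 : Lmap a w - Lmap a z =
        ((w.val : ℕ) : ZMod (2*n)) - ((z.val : ℕ) : ZMod (2*n)) := by
      unfold Lmap; ring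
    rw [h1, val_sub_eq, ZMod.val_cast_of_lt (by have := ZMod.val_lt z; omega),
      ZMod.val_cast_of_lt (by have := ZMod.val_lt w; omega)]
  unfold InArc
  rw [key y u, key v u, val_sub_eq, val_sub_eq]
  have hy := ZMod.val_lt y
  have hu := ZMod.val_lt u
  have hv := ZMod.val_lt v
  split_ifs <;> omega

lemma interlace_shrink_iff (hn : 2 ≤ n) (B : Bouquet n) (a : ZMod (2*n))
    (ha : B.σ a = a + 1) (k l : ZMod (2*(n-1))) :
    Interlace (shrink hn B a ha) k l ↔ Interlace B (Lmap a k) (Lmap a l) := by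
  haveI := nz1 hn; haveI := nz2 hn
  rw [interlace_iff_xor_inArc, interlace_iff_xor_inArc]
  rw [← L_shrink_σ hn B a ha k, ← L_shrink_σ hn B a ha l]
  rw [inArc_L hn a k _ l, inArc_L hn a k _ ((shrink hn B a ha).σ l)]

lemma noninterlace_chord_left (hn : 2 ≤ n) (B : Bouquet n) (a : ZMod (2*n))
    (ha : B.σ a = a + 1) (i j : ZMod (2*n)) (hi : i = a ∨ i = a + 1) :
    ¬ Interlace B i j := by
  haveI := nz1 hn
  haveI : Fact (1 < 2*n) := ⟨by omega⟩
  rw [interlace_iff_xor_inArc]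
  rcases hi with rfl | rfl
  · rw [ha]
    have hfalse : ∀ y : ZMod (2*n), ¬ InArc i (i+1) y := by
      intro y hy
      obtain ⟨h1, h2⟩ := hy
      rw [show i + 1 - i = 1 by ring, ZMod.val_one] at h2
      omega
    rintro (⟨h, -⟩ | ⟨h, -⟩) <;> exact hfalse _ h
  · have hσ : B.σ (a + 1) = a := by
      rw [← ha, B.invol]
    rw [hσ]
    have hchar : ∀ y : ZMod (2*n), InArc (a+1) a y ↔ (y ≠ a + 1 ∧ y ≠ a) := by
      intro y
      unfold InArc
      rw [show a - (a+1) = -1 by ring, neg_one_val' hn]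
      constructor
      · rintro ⟨h1, h2⟩
        constructor
        · intro hc
          rw [hc, show a + 1 - (a+1) = (0 : ZMod (2*n)) by ring, ZMod.val_zero] at h1
          omega
        · intro hc
          rw [hc, show a - (a+1) = -1 by ring, neg_one_val' hn] at h2
          omega
      · rintro ⟨h1, h2⟩
        have hv := ZMod.val_lt (y - (a+1))
        have hne1 : (y - (a+1)).val ≠ 0 := by
          intro hc
          exact h1 (by linear_combination (ZMod.val_eq_zero _).mp hc)
        have hne2 : (y - (a+1)).val ≠ 2*n - 1 := by
          intro hc
          apply h2
          have h8 : y - (a+1) = -1 := by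
            apply ZMod.val_injective
            rw [hc, neg_one_val' hn]
          linear_combination h8
        omega
    apply not_xor_of_iff
    rw [hchar j, hchar (B.σ j)]
    constructor
    · rintro ⟨h1, h2⟩
      refine ⟨fun hc => h2 ?_, fun hc => h1 ?_⟩
      · rw [← B.invol j, hc, hσ]
      · rw [← B.invol j, hc, ha]
    · rintro ⟨h1, h2⟩
      refine ⟨fun hc => h2 ?_, fun hc => h1 ?_⟩
      · rw [hc, hσ]
      · rw [hc, ha]

lemma noninterlace_chord_right (hn : 2 ≤ n) (B : Bouquet n) (a : ZMod (2*n))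
    (ha : B.σ a = a + 1) (i j : ZMod (2*n)) (hi1 : i ≠ a) (hi2 : i ≠ a + 1)
    (hj : j = a ∨ j = a + 1) : ¬ Interlace B i j := by
  haveI := nz1 hn
  rw [interlace_iff_xor_inArc]
  have hσ1 : B.σ i ≠ a := sigma_ne_a ha hi2
  have hσ2 : B.σ i ≠ a + 1 := sigma_ne_a1 ha hi1
  have hkey : InArc i (B.σ i) a ↔ InArc i (B.σ i) (a+1) := by
    have hstep : (a + 1 - i).val = (a - i).val + 1 := by
      rw [show a + 1 - i = (a - i) + 1 by ring]
      apply val_add_one_of_ne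
      intro hc
      exact hi2 (by linear_combination -hc)
    have hd0 : (a - i).val ≠ 0 := by
      intro hc
      exact hi1 (by linear_combination -((ZMod.val_eq_zero _).mp hc))
    have hdv : (a - i).val + 1 ≠ (B.σ i - i).val := by
      intro hc
      apply hσ2
      have : a + 1 - i = B.σ i - i := by
        apply ZMod.val_injective
        rw [hstep, hc]
      linear_combination -this
    unfold InArc
    rw [hstep]
    omega
  rcases hj with rfl | rfl
  · rw [ha]
    exact not_xor_of_iff hkey
  · rw [show B.σ (a+1) = a from by rw [← ha, B.invol]]
    exact not_xor_of_iff hkey.symm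

end Transfer

section NoncrossTransfer
variable {n : ℕ}

lemma phi_false (B : Bouquet n) (i : ZMod (2*n)) :
    Phi B (i, false) = if B.t (i+1) = true then (B.σ (i+1) - 1, true)
      else (B.σ (i+1), false) := rfl

lemma phi_true (B : Bouquet n) (i : ZMod (2*n)) :
    Phi B (i, true) = if B.t i = true then (B.σ i, false) else (B.σ i - 1, true) := rfl

lemma noncross_of_shrink (hn : 2 ≤ n) (B : Bouquet n) (a : ZMod (2*n))
    (ha : B.σ a = a + 1)
    (hB' : ∀ k l, ¬ Interlace (shrink hn B a ha) k l) :
    ∀ i j, ¬ Interlace B i j := by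
  intro i j
  by_cases hi : i = a ∨ i = a + 1
  · exact noninterlace_chord_left hn B a ha i j hi
  push_neg at hi
  by_cases hj : j = a ∨ j = a + 1
  · exact noninterlace_chord_right hn B a ha i j hi.1 hi.2 hj
  push_neg at hj
  rw [← Lr hn a i hi.1 hi.2, ← Lr hn a j hj.1 hj.2, ← interlace_shrink_iff hn B a ha]
  exact hB' _ _

lemma shrink_noncross (hn : 2 ≤ n) (B : Bouquet n) (a : ZMod (2*n))
    (ha : B.σ a = a + 1) (hB : ∀ i j, ¬ Interlace B i j) :
    ∀ k l, ¬ Interlace (shrink hn B a ha) k l := by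
  intro k l
  rw [interlace_shrink_iff hn B a ha]
  exact hB _ _

lemma untwisted_shrink_iff (hn : 2 ≤ n) (B : Bouquet n) (a : ZMod (2*n))
    (ha : B.σ a = a + 1) (hta : B.t a = false) :
    (∀ i, B.t i = false) ↔ (∀ k, (shrink hn B a ha).t k = false) := by
  constructor
  · intro h k
    rw [shrink_t]
    exact h _
  · intro h i
    by_cases h1 : i = a
    · rw [h1]; exact hta
    by_cases h2 : i = a + 1
    · rw [h2, ← ha, B.t_inv]; exact hta
    rw [← Lr hn a i h1 h2]
    exact h (rmap a i)

lemma phi_fixed_consec [NeZero (2*n)] (B : Bouquet n) (p : ZMod (2*n) × Bool)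
    (hp : Phi B p = p) : ∃ a, B.σ a = a + 1 ∧ B.t a = false := by
  obtain ⟨i, b⟩ := p
  cases b
  · rw [phi_false] at hp
    by_cases ht : B.t (i+1) = true
    · rw [if_pos ht] at hp
      exact absurd (congrArg Prod.snd hp) (by simp)
    · rw [if_neg ht] at hp
      have h1 : B.σ (i+1) = i := congrArg Prod.fst hp
      refine ⟨i, ?_, ?_⟩
      · rw [← h1, B.invol, h1]
      · have h2 := B.t_inv (i+1)
        rw [h1] at h2
        simp only [Bool.not_eq_true] at ht
        rw [h2, ht]
  · rw [phi_true] at hp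
    by_cases ht : B.t i = true
    · rw [if_pos ht] at hp
      exact absurd (congrArg Prod.snd hp) (by simp)
    · rw [if_neg ht] at hp
      have h1 : B.σ i - 1 = i := congrArg Prod.fst hp
      simp only [Bool.not_eq_true] at ht
      exact ⟨i, by linear_combination h1, ht⟩

lemma phi_fixed_of_consec [NeZero (2*n)] (B : Bouquet n) (a : ZMod (2*n))
    (ha : B.σ a = a + 1) (hta : B.t a = false) : Phi B (a, true) = (a, true) := by
  rw [phi_true, if_neg (by rw [hta]; simp), ha]
  simp

/-- the four boundary points removed when deleting the chord `{a, a+1}`. -/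
def chordSet (a : ZMod (2*n)) : Finset (ZMod (2*n) × Bool) :=
  {(a, false), (a, true), (a+1, false), (a+1, true)}

lemma mem_chordSet (a : ZMod (2*n)) (p : ZMod (2*n) × Bool) :
    p ∈ chordSet a ↔ (p.1 = a ∨ p.1 = a + 1) := by
  obtain ⟨i, b⟩ := p
  cases b <;> simp [chordSet]

end NoncrossTransfer

section OrbitShrink
variable {n : ℕ}

lemma zmod_small_ne (hn : 2 ≤ n) (c : ℕ) (h1 : 1 ≤ c) (h2 : c < 2*n) :
    ((c : ℕ) : ZMod (2*n)) ≠ 0 := by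
  haveI := nz1 hn
  rw [Ne, ZMod.natCast_eq_zero_iff]
  intro hdvd
  exact absurd (Nat.le_of_dvd (by omega) hdvd) (by omega)

lemma a1_ne_a (hn : 2 ≤ n) (a : ZMod (2*n)) : a + 1 ≠ a := by
  intro h
  apply zmod_small_ne hn 1 le_rfl (by omega)
  push_cast
  linear_combination h

lemma a2_ne_a (hn : 2 ≤ n) (a : ZMod (2*n)) : a + 2 ≠ a := by
  intro h
  apply zmod_small_ne hn 2 (by omega) (by omega)
  push_cast
  linear_combination h

lemma a2_ne_a1 (hn : 2 ≤ n) (a : ZMod (2*n)) : a + 2 ≠ a + 1 := by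
  intro h
  apply zmod_small_ne hn 1 le_rfl (by omega)
  push_cast
  linear_combination h

lemma am1_ne_a (hn : 2 ≤ n) (a : ZMod (2*n)) : a - 1 ≠ a := by
  intro h
  apply zmod_small_ne hn 1 le_rfl (by omega)
  push_cast
  linear_combination -h

lemma am1_ne_a1 (hn : 2 ≤ n) (a : ZMod (2*n)) : a - 1 ≠ a + 1 := by
  intro h
  apply zmod_small_ne hn 2 (by omega) (by omega)
  push_cast
  linear_combination -h

/-- relabeling equivalence between the small circle and the complement of the chord. -/
def shrinkEquiv (hn : 2 ≤ n) (a : ZMod (2*n)) :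
    (ZMod (2*(n-1)) × Bool) ≃ {p : ZMod (2*n) × Bool // p ∉ chordSet a} where
  toFun x := ⟨(Lmap a x.1, x.2), by
    rw [mem_chordSet]
    push_neg
    exact ⟨L_ne_a hn a x.1, L_ne_a1 hn a x.1⟩⟩
  invFun p := (rmap a p.1.1, p.1.2)
  left_inv x := by
    simp only [rL hn]
  right_inv p := by
    obtain ⟨⟨i, b⟩, hp⟩ := p
    rw [mem_chordSet] at hp
    push_neg at hp
    simp only [Subtype.mk.injEq, Prod.mk.injEq]
    exact ⟨Lr hn a i hp.1 hp.2, trivial⟩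

lemma phi_shrink_compat (hn : 2 ≤ n) (B : Bouquet n) (a : ZMod (2*n))
    (ha : B.σ a = a + 1) (hta : B.t a = false) (x : ZMod (2*(n-1)) × Bool) :
    ((Lmap a (Phi (shrink hn B a ha) x).1, (Phi (shrink hn B a ha) x).2) : ZMod (2*n) × Bool)
      = (if Phi B (Lmap a x.1, x.2) ∈ chordSet a
          then Phi B (Phi B (Lmap a x.1, x.2))
          else Phi B (Lmap a x.1, x.2)) := by
  haveI := nz1 hn; haveI := nz2 hn
  obtain ⟨k, b⟩ := x
  set B' := shrink hn B a ha with hB'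
  have hta1 : B.t (a + 1) = false := by rw [← ha, B.t_inv]; exact hta
  have hσa1 : B.σ (a + 1) = a := by rw [← ha, B.invol]
  cases b
  · -- b = false
    by_cases hk : k = -1
    · -- k = -1 : next point is the chord
      subst hk
      have hLk : Lmap a (-1 : ZMod (2*(n-1))) = a - 1 := L_neg_one hn a
      have h1 : Phi B (Lmap a (-1 : ZMod (2*(n-1))), false) = (a + 1, false) := by
        rw [phi_false, hLk, show a - 1 + 1 = a by ring, if_neg (by rw [hta]; simp), ha]
      rw [h1, if_pos (by rw [mem_chordSet]; right; rfl)]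
      rw [phi_false, phi_false]
      have hzero : (-1 : ZMod (2*(n-1))) + 1 = 0 := by ring
      rw [hzero]
      have hBt0 : B'.t (0 + 1 - 1) = B.t (a + 2) := by
        rw [show (0 : ZMod (2*(n-1))) + 1 - 1 = 0 by ring, shrink_t, L_zero hn]
      have hb't : B'.t ((0:ZMod (2*(n-1)))) = B.t (a + 2) := by
        rw [shrink_t, L_zero hn]
      have hσ0 : Lmap a (B'.σ 0) = B.σ (a + 2) := by
        rw [L_shrink_σ hn B a ha, L_zero hn]
      by_cases ht2 : B.t (a + 2) = true
      · rw [if_pos (show B'.t (0:ZMod (2*(n-1))) = true by rw [hb't]; exact ht2),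
          if_pos (show B.t (a+1+1) = true by rw [show a + 1 + 1 = a + 2 by ring]; exact ht2)]
        simp only [Prod.mk.injEq]
        refine ⟨?_, trivial⟩
        have hs0 : B'.σ 0 ≠ 0 := by
          intro hc
          have := congrArg (Lmap a) hc
          rw [hσ0, L_zero hn] at this
          exact B.fpf (a+2) this
        rw [L_pred hn a _ hs0, hσ0, show a + 1 + 1 = a + 2 by ring]
      · rw [if_neg (show ¬ B'.t (0:ZMod (2*(n-1))) = true by rw [hb't]; exact ht2),
          if_neg (show ¬ B.t (a+1+1) = true by rw [show a + 1 + 1 = a + 2 by ring]; exact ht2)]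
        simp only [Prod.mk.injEq]
        refine ⟨?_, trivial⟩
        rw [hσ0, show a + 1 + 1 = a + 2 by ring]
    · -- k ≠ -1
      have hLsucc : Lmap a (k + 1) = Lmap a k + 1 := L_succ hn a k hk
      have hb't : B'.t (k + 1) = B.t (Lmap a k + 1) := by
        rw [shrink_t, hLsucc]
      have hσk1 : Lmap a (B'.σ (k+1)) = B.σ (Lmap a k + 1) := by
        rw [L_shrink_σ hn B a ha, hLsucc]
      have hσne_a : B.σ (Lmap a k + 1) ≠ a := by
        rw [← hLsucc]; exact sigma_ne_a ha (L_ne_a1 hn a (k+1))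
      have hσne_a1 : B.σ (Lmap a k + 1) ≠ a + 1 := by
        rw [← hLsucc]; exact sigma_ne_a1 ha (L_ne_a hn a (k+1))
      rw [phi_false, phi_false]
      by_cases htk : B.t (Lmap a k + 1) = true
      · rw [if_pos (by rw [hb't]; exact htk), if_pos htk]
        by_cases hs : B'.σ (k+1) = 0
        · -- lands on the chord
          have hσval : B.σ (Lmap a k + 1) = a + 2 := by
            rw [← hσk1, hs, L_zero hn]
          have hcond : ((B.σ (Lmap a k + 1) - 1, true) : ZMod (2*n) × Bool) ∈ chordSet a := by
            rw [mem_chordSet, hσval]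
            right
            ring
          rw [if_pos hcond, hσval, phi_true,
            show a + 2 - 1 = a + 1 by ring, if_neg (by rw [hta1]; simp), hσa1]
          simp only [Prod.mk.injEq]
          refine ⟨?_, trivial⟩
          rw [hs, show (0:ZMod (2*(n-1))) - 1 = -1 by ring, L_neg_one hn]
        · have hcond : ((B.σ (Lmap a k + 1) - 1, true) : ZMod (2*n) × Bool) ∉ chordSet a := by
            rw [mem_chordSet]
            push_neg
            constructor
            · intro hc
              exact hσne_a1 (by linear_combination hc)
            · intro hc
              apply hs
              apply L_inj hn a
              rw [hσk1, L_zero hn]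
              linear_combination hc
          rw [if_neg hcond]
          simp only [Prod.mk.injEq]
          refine ⟨?_, trivial⟩
          rw [L_pred hn a _ hs, hσk1]
      · rw [if_neg (by rw [hb't]; exact htk), if_neg htk]
        have hcond : ((B.σ (Lmap a k + 1), false) : ZMod (2*n) × Bool) ∉ chordSet a := by
          rw [mem_chordSet]
          push_neg
          exact ⟨hσne_a, hσne_a1⟩
        rw [if_neg hcond]
        simp only [Prod.mk.injEq]
        exact ⟨hσk1, trivial⟩
  · -- b = true
    have hb't : B'.t k = B.t (Lmap a k) := shrink_t hn B a ha k
    have hσk : Lmap a (B'.σ k) = B.σ (Lmap a k) := L_shrink_σ hn B a ha k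
    have hσne_a : B.σ (Lmap a k) ≠ a := sigma_ne_a ha (L_ne_a1 hn a k)
    have hσne_a1 : B.σ (Lmap a k) ≠ a + 1 := sigma_ne_a1 ha (L_ne_a hn a k)
    rw [phi_true, phi_true]
    by_cases htk : B.t (Lmap a k) = true
    · rw [if_pos (by rw [hb't]; exact htk), if_pos htk]
      have hcond : ((B.σ (Lmap a k), false) : ZMod (2*n) × Bool) ∉ chordSet a := by
        rw [mem_chordSet]
        push_neg
        exact ⟨hσne_a, hσne_a1⟩
      rw [if_neg hcond]
      simp only [Prod.mk.injEq]
      exact ⟨hσk, trivial⟩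
    · rw [if_neg (by rw [hb't]; exact htk), if_neg htk]
      by_cases hs : B'.σ k = 0
      · have hσval : B.σ (Lmap a k) = a + 2 := by
          rw [← hσk, hs, L_zero hn]
        have hcond : ((B.σ (Lmap a k) - 1, true) : ZMod (2*n) × Bool) ∈ chordSet a := by
          rw [mem_chordSet, hσval]
          right
          ring
        rw [if_pos hcond, hσval, phi_true,
          show a + 2 - 1 = a + 1 by ring, if_neg (by rw [hta1]; simp), hσa1]
        simp only [Prod.mk.injEq]
        refine ⟨?_, trivial⟩
        rw [hs, show (0:ZMod (2*(n-1))) - 1 = -1 by ring, L_neg_one hn]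
      · have hcond : ((B.σ (Lmap a k) - 1, true) : ZMod (2*n) × Bool) ∉ chordSet a := by
          rw [mem_chordSet]
          push_neg
          constructor
          · intro hc
            exact hσne_a1 (by linear_combination hc)
          · intro hc
            apply hs
            apply L_inj hn a
            rw [hσk, L_zero hn]
            linear_combination hc
        rw [if_neg hcond]
        simp only [Prod.mk.injEq]
        refine ⟨?_, trivial⟩
        rw [L_pred hn a _ hs, hσk]
end OrbitShrink

section OrbitShrink2
variable {n : ℕ}

lemma orbitCount_shrink (hn : 2 ≤ n) (B : Bouquet n) (a : ZMod (2*n))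
    (ha : B.σ a = a + 1) (hta : B.t a = false) :
    orbitCount (Phi B) = orbitCount (Phi (shrink hn B a ha)) + 2 := by
  haveI := nz1 hn; haveI := nz2 hn
  have hta1 : B.t (a + 1) = false := by rw [← ha, B.t_inv]; exact hta
  have hσa1 : B.σ (a + 1) = a := by rw [← ha, B.invol]
  set F : Finset (ZMod (2*n) × Bool) := {(a, false), (a, true)} with hF
  have hcard : F.card = 2 := by
    rw [hF, Finset.card_insert_of_notMem (by simp), Finset.card_singleton]
  have hmemF : ∀ p : ZMod (2*n) × Bool, p ∈ F ↔ (p = (a, false) ∨ p = (a, true)) := by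
    intro p; rw [hF]; simp
  have h := orbitCount_splice (Phi B) (chordSet a) F
    (by
      intro p hp
      rw [hmemF] at hp
      rw [mem_chordSet]
      rcases hp with rfl | rfl <;> simp)
    (by
      intro p hp
      rw [hmemF] at hp
      rcases hp with rfl | rfl
      · rw [phi_false, if_neg (by rw [hta1]; simp), hσa1]
      · exact phi_fixed_of_consec B a ha hta)
    (by
      intro p hp
      rw [hmemF] at hp ⊢
      obtain ⟨i, b⟩ := p
      cases b
      · rw [phi_false] at hp
        by_cases ht : B.t (i+1) = true
        · rw [if_pos ht] at hp
          exfalso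
          rcases hp with h | h
          · exact absurd (congrArg Prod.snd h) (by simp)
          · have h1 : B.σ (i+1) - 1 = a := congrArg Prod.fst h
            have h2 : B.σ (i+1) = a + 1 := by linear_combination h1
            have h3 : i + 1 = a := by
              rw [← B.invol (i+1), h2, hσa1]
            rw [h3, hta] at ht
            simp at ht
        · rw [if_neg ht] at hp
          rcases hp with h | h
          · have h1 : B.σ (i+1) = a := congrArg Prod.fst h
            have h2 : i + 1 = a + 1 := by
              rw [← B.invol (i+1), h1, ha]
            have h3 : i = a := by linear_combination h2
            left; rw [h3]
          · exact absurd (congrArg Prod.snd h) (by simp)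
      · rw [phi_true] at hp
        by_cases ht : B.t i = true
        · rw [if_pos ht] at hp
          exfalso
          rcases hp with h | h
          · have h1 : B.σ i = a := congrArg Prod.fst h
            have h2 : i = a + 1 := by
              rw [← B.invol i, h1, ha]
            rw [h2, hta1] at ht
            simp at ht
          · exact absurd (congrArg Prod.snd h) (by simp)
        · rw [if_neg ht] at hp
          rcases hp with h | h
          · exact absurd (congrArg Prod.snd h) (by simp)
          · have h1 : B.σ i - 1 = a := congrArg Prod.fst h
            have h2 : B.σ i = a + 1 := by linear_combination h1
            have h3 : i = a := by
              rw [← B.invol i, h2, hσa1]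
            right; rw [h3])
    (by
      intro p hp hpF
      rw [mem_chordSet] at hp
      rw [hmemF] at hpF
      obtain ⟨i, b⟩ := p
      simp only [Prod.mk.injEq] at hpF
      have hi : i = a + 1 := by
        rcases hp with h | h
        · exfalso
          apply hpF
          cases b
          · left; exact ⟨h, rfl⟩
          · right; exact ⟨h, rfl⟩
        · exact h
      subst hi
      cases b
      · rw [phi_false, mem_chordSet]
        by_cases ht : B.t (a+1+1) = true
        · rw [if_pos ht]
          push_neg
          constructor
          · intro hc
            have : B.σ (a+1+1) = a + 1 := by linear_combination hc
            exact sigma_ne_a1 ha (by rw [show a+1+1 = a+2 by ring]; exact a2_ne_a hn a) this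
          · intro hc
            have : B.σ (a+1+1) = a + 1 + 1 := by linear_combination hc
            exact B.fpf _ this
        · rw [if_neg ht]
          push_neg
          constructor
          · exact sigma_ne_a ha (by rw [show a+1+1 = a+2 by ring]; exact a2_ne_a1 hn a)
          · exact sigma_ne_a1 ha (by rw [show a+1+1 = a+2 by ring]; exact a2_ne_a hn a)
      · rw [phi_true, if_neg (by rw [hta1]; simp), hσa1, mem_chordSet]
        push_neg
        exact ⟨am1_ne_a hn a, am1_ne_a1 hn a⟩)
    (shrinkEquiv hn a) (Phi (shrink hn B a ha))
    (by
      intro x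
      exact phi_shrink_compat hn B a ha hta x)
  rw [h, hcard]

end OrbitShrink2

section MainLemma

lemma main_bound : ∀ n : ℕ, 1 ≤ n → ∀ B : Bouquet n,
    orbitCount (Phi B) ≤ 2*n+2 ∧
    (orbitCount (Phi B) = 2*n+2 ↔
      ((∀ i, B.t i = false) ∧ ∀ i j, ¬ Interlace B i j)) := by
  intro n
  induction n using Nat.strong_induction_on with
  | _ n ih =>
  intro hn B
  haveI : NeZero (2*n) := ⟨by omega⟩
  rcases Nat.lt_or_ge n 2 with h2 | h2
  · -- base case n = 1
    have hn1 : n = 1 := by omega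
    subst hn1
    have h01 : ∀ y : ZMod (2*1), y = 0 ∨ y = 1 := by decide
    have hσ : ∀ x : ZMod (2*1), B.σ x = x + 1 := by
      intro x
      rcases h01 x with rfl | rfl
      · rcases h01 (B.σ 0) with h | h
        · exact absurd h (B.fpf 0)
        · rw [h]; decide
      · rcases h01 (B.σ 1) with h | h
        · rw [h]; decide
        · exact absurd h (B.fpf 1)
    have ht01 : B.t 1 = B.t 0 := by
      have h := B.t_inv 0
      rwa [hσ 0, zero_add] at h
    by_cases ht : B.t 0 = true
    · -- twisted loop
      have htall : ∀ i : ZMod (2*1), B.t i = true := by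
        intro i
        rcases h01 i with rfl | rfl
        · exact ht
        · rw [ht01]; exact ht
      have hnofix : ∀ p : ZMod (2*1) × Bool, Phi B p ≠ p := by
        rintro ⟨i, b⟩ hp
        cases b
        · rw [phi_false, if_pos (htall _)] at hp
          exact absurd (congrArg Prod.snd hp) (by simp)
        · rw [phi_true, if_pos (htall _)] at hp
          exact absurd (congrArg Prod.snd hp) (by simp)
      have hbound := two_mul_orbitCount_le (Phi B) hnofix
      have hcard : Nat.card (ZMod (2*1) × Bool) = 4 := by
        rw [Nat.card_eq_fintype_card, Fintype.card_prod, ZMod.card, Fintype.card_bool]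
      constructor
      · omega
      · constructor
        · intro h; omega
        · rintro ⟨hT, -⟩
          rw [hT 0] at ht
          exact absurd ht (by simp)
    · -- untwisted loop
      have ht0 : B.t 0 = false := by simpa using ht
      have htall : ∀ i : ZMod (2*1), B.t i = false := by
        intro i
        rcases h01 i with rfl | rfl
        · exact ht0
        · rw [ht01]; exact ht0
      have hid : ∀ p : ZMod (2*1) × Bool, Phi B p = p := by
        rintro ⟨i, b⟩
        cases b
        · rw [phi_false, if_neg (by rw [htall]; simp), hσ]
          have h : i + 1 + 1 = i := by revert i; decide
          rw [h]
        · rw [phi_true, if_neg (by rw [htall]; simp), hσ]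
          simp only [Prod.mk.injEq]
          exact ⟨by ring, trivial⟩
      have horb := orbitCount_of_id (Phi B) hid
      have hcard : Nat.card (ZMod (2*1) × Bool) = 4 := by
        rw [Nat.card_eq_fintype_card, Fintype.card_prod, ZMod.card, Fintype.card_bool]
      rw [horb, hcard]
      refine ⟨by omega, ?_⟩
      constructor
      · intro _
        refine ⟨htall, ?_⟩
        intro i j
        apply noninterlace_self
        rw [hσ]
        revert i j
        decide
      · intro _; rfl
  · -- inductive step n ≥ 2
    by_cases hfix : ∃ p, Phi B p = p
    · obtain ⟨p, hp⟩ := hfix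
      obtain ⟨a, ha, hta⟩ := phi_fixed_consec B p hp
      have horb := orbitCount_shrink h2 B a ha hta
      obtain ⟨IH1, IH2⟩ := ih (n-1) (by omega) (by omega) (shrink h2 B a ha)
      constructor
      · omega
      · have h1 : orbitCount (Phi B) = 2*n + 2 ↔
            orbitCount (Phi (shrink h2 B a ha)) = 2*(n-1)+2 := by omega
        rw [h1, IH2]
        constructor
        · rintro ⟨hT, hC⟩
          exact ⟨(untwisted_shrink_iff h2 B a ha hta).mpr hT,
            noncross_of_shrink h2 B a ha hC⟩
        · rintro ⟨hT, hC⟩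
          exact ⟨(untwisted_shrink_iff h2 B a ha hta).mp hT,
            shrink_noncross h2 B a ha hC⟩
    · push_neg at hfix
      have hbound := two_mul_orbitCount_le (Phi B) hfix
      have hcard : Nat.card (ZMod (2*n) × Bool) = 4*n := by
        rw [Nat.card_eq_fintype_card, Fintype.card_prod, ZMod.card, Fintype.card_bool]
        ring
      constructor
      · omega
      · constructor
        · intro h; omega
        · rintro ⟨hT, hC⟩
          obtain ⟨a, ha⟩ := exists_consec B hC
          exact absurd (phi_fixed_of_consec B a ha (hT a)) (hfix _)

end MainLemma


/-- A bouquet has Euler genus `0` if and only if every chord is untwisted and no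
two chords interlace. -/
theorem eulerGenus_eq_zero_iff {n : ℕ} (B : Bouquet n) :
    eulerGenus B = 0 ↔ ((∀ i, B.t i = false) ∧ ∀ i j, ¬ Interlace B i j) := by
  rcases Nat.eq_zero_or_pos n with rfl | hn
  · -- n = 0 : ZMod 0 = ℤ, everything is pinned
    have hε : eulerGenus B = 0 := by
      unfold eulerGenus numBoundary
      rw [if_pos rfl]
    rw [hε]
    simp only [true_iff]
    refine ⟨B.pin_t rfl, ?_⟩
    intro i j
    have hσ := B.pin_σ rfl
    have intlem : ∀ y : ℤ, ((-(y+1)).natAbs = y.natAbs + 1 ∨ y.natAbs = (-(y+1)).natAbs + 1) := by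
      intro y
      omega
    have key : ∀ x : ZMod (2*0), ((B.σ x).val = x.val + 1 ∨ x.val = (B.σ x).val + 1) := by
      intro x
      rw [hσ x]
      exact intlem x
    unfold Interlace
    rintro (⟨⟨h1, h2⟩, -⟩ | ⟨⟨h1, h2⟩, -⟩) <;>
      rcases key i with h | h <;>
      · rw [h] at h1 h2 <;> omega
  · haveI : NeZero (2*n) := ⟨by omega⟩
    obtain ⟨hb, hiff⟩ := main_bound n hn B
    have hnum : numBoundary B = orbitCount (Phi B) / 2 := by
      unfold numBoundary
      rw [if_neg (by omega)]
    unfold eulerGenus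
    rw [hnum]
    constructor
    · intro h
      exact hiff.mp (by omega)
    · intro h
      have := hiff.mpr h
      omega

end Bouquet
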